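/- For the unconstrained bilinear problem min_x max_y c^T x + y^T A x - b^T y, the operator F(z) = (c + A^T y, -Ax + b) satisfies the metric sub-regularity condition (s/2)·σ_min^+(A) · dist_{P_s}(z, Z*) ≤ dist_{P_s^{-1}}(0, F(z)) for all z ∈ R^{m+n}, when s ≤ 1/(2‖A‖), where Z* is the set of saddle points. -/

import Mathlib

open Matrix

/-- The ℓ₂ operator norm of a real matrix. -/
noncomputable def opNorm {m n : ℕ} (A : Matrix (Fin m) (Fin n) ℝ) : ℝ :=
  ‖LinearMap.toContinuousLinearMap (Matrix.toEuclideanLin A)‖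

/-- The PDHG matrix `P_s = [[(1/s)Iₙ, -Aᵀ], [-A, (1/s)Iₘ]]`. -/
noncomputable def Ps {m n : ℕ} (s : ℝ) (A : Matrix (Fin m) (Fin n) ℝ) :
    Matrix (Fin n ⊕ Fin m) (Fin n ⊕ Fin m) ℝ :=
  Matrix.fromBlocks ((1/s) • 1) (-Aᵀ) (-A) ((1/s) • 1)

/-- Quadratic form `⟨v, G v⟩`. -/
def qf {ι : Type*} [Fintype ι] (G : Matrix ι ι ℝ) (v : ι → ℝ) : ℝ := v ⬝ᵥ G.mulVec v

/-- Squared distance (in the quadratic form of `G`) from `0` to a set `S`. -/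
noncomputable def distSqTo {ι : Type*} [Fintype ι] (G : Matrix ι ι ℝ)
    (S : Set (ι → ℝ)) : ℝ := sInf (qf G '' S)

/-- The smallest nonzero singular value of `A`: the square root of the smallest
positive eigenvalue of `AᵀA`. -/
noncomputable def sigmaMinPos {m n : ℕ} (A : Matrix (Fin m) (Fin n) ℝ) : ℝ :=
  Real.sqrt (sInf {t : ℝ | 0 < t ∧ ∃ x : Fin n → ℝ, x ≠ 0 ∧ (Aᵀ * A).mulVec x = t • x})

/-!
Because `s‖A‖ ≤ 1/2`, the quadratic form of `P_s` lies between `(1/(2s))‖v‖²` and `(2/s)‖v‖²`.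
Hence `P_s` is positive definite, and Cauchy–Schwarz for this form gives
`⟨v, P_s⁻¹ v⟩ ≥ (s/2)‖v‖²`.

`F` is affine with linear part `(x, y) ↦ (Aᵀy, -Ax)`. Splitting `z - z₀` (for a zero `z₀`) into a
part in `ker A × ker Aᵀ` and a part `w` orthogonal to it yields a zero `z - w` of `F` with
`F z = (Aᵀ w_y, -A w_x)`. Expanding `w_x` in an eigenbasis of `AᵀA` gives `‖A w_x‖² ≥ σ²‖w_x‖²`,
and the same holds for `w_y`, because the positive eigenvalues of `AAᵀ` are eigenvalues of `AᵀA`.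
Chaining these, `(s/2)²σ² dist²_P(z, Z*) ≤ (s/2)²σ² (2/s)‖w‖² ≤ (s/2)‖F z‖² ≤ ⟨F z, P_s⁻¹ F z⟩`.
-/

open WithLp

def IsPosEigenvalue {ι : Type*} [Fintype ι] (M : Matrix ι ι ℝ) (t : ℝ) : Prop :=
  0 < t ∧ ∃ x : ι → ℝ, x ≠ 0 ∧ M *ᵥ x = t • x

section QuadraticForm

variable {ι : Type*} [Fintype ι] {G : Matrix ι ι ℝ}

lemma real_dotProduct_self_nonneg (v : ι → ℝ) : 0 ≤ v ⬝ᵥ v := by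
  simpa using dotProduct_star_self_nonneg v

lemma dotProduct_mulVec_sq_le_of_posSemidef {P : Matrix ι ι ℝ} (hP : P.PosSemidef)
    (a b : ι → ℝ) : (a ⬝ᵥ P *ᵥ b) ^ 2 ≤ (a ⬝ᵥ P *ᵥ a) * (b ⬝ᵥ P *ᵥ b) := by
  let := P.toSeminormedAddCommGroup hP
  let := P.toInnerProductSpace hP
  have := real_inner_mul_inner_self_le a b
  change ((P *ᵥ b) ⬝ᵥ a) * ((P *ᵥ b) ⬝ᵥ a) ≤ ((P *ᵥ a) ⬝ᵥ a) * ((P *ᵥ b) ⬝ᵥ b) at this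
  simpa only [dotProduct_comm _ a, dotProduct_comm _ b, sq] using this

lemma dotProduct_self_le_mul_qf_inv [DecidableEq ι] {P : Matrix ι ι ℝ} (hP : P.PosDef) {C : ℝ}
    (hC : ∀ v, qf P v ≤ C * (v ⬝ᵥ v)) (v : ι → ℝ) : v ⬝ᵥ v ≤ C * qf P⁻¹ v := by
  rcases (real_dotProduct_self_nonneg v).eq_or_lt with h0 | hpos
  · simp [dotProduct_self_eq_zero.mp h0.symm, qf]
  have hPw : P *ᵥ (P⁻¹ *ᵥ v) = v := by
    rw [mulVec_mulVec, mul_nonsing_inv _ (isUnit_iff_ne_zero.mpr hP.det_pos.ne'), one_mulVec]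
  have hCS := dotProduct_mulVec_sq_le_of_posSemidef hP.posSemidef v (P⁻¹ *ᵥ v)
  rw [hPw, dotProduct_comm (P⁻¹ *ᵥ v) v] at hCS
  have hQ : 0 ≤ qf P⁻¹ v := by simpa [qf] using hP.inv.posSemidef.dotProduct_mulVec_nonneg v
  have : (v ⬝ᵥ v) * (v ⬝ᵥ v) ≤ (v ⬝ᵥ v) * (C * qf P⁻¹ v) := by
    calc (v ⬝ᵥ v) * (v ⬝ᵥ v) ≤ qf P v * qf P⁻¹ v := by rw [← sq]; exact hCS
      _ ≤ C * (v ⬝ᵥ v) * qf P⁻¹ v := mul_le_mul_of_nonneg_right (hC v) hQ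
      _ = (v ⬝ᵥ v) * (C * qf P⁻¹ v) := by ring
  exact le_of_mul_le_mul_left this hpos

lemma qf_nonneg (hG : G.PosSemidef) (v : ι → ℝ) : 0 ≤ qf G v := by
  simpa [qf] using hG.dotProduct_mulVec_nonneg v

lemma distSqTo_le_qf (hG : G.PosSemidef) {S : Set (ι → ℝ)} {v : ι → ℝ} (hv : v ∈ S) :
    distSqTo G S ≤ qf G v :=
  csInf_le ⟨0, by rintro _ ⟨u, -, rfl⟩; exact qf_nonneg hG u⟩ ⟨v, hv, rfl⟩

end QuadraticForm

section Spectral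

variable {ι κ : Type*} [Fintype ι]

lemma Matrix.PosSemidef.mul_dotProduct_self_le_of_orthogonal_ker [DecidableEq ι] {M : Matrix ι ι ℝ}
    (hM : M.PosSemidef) {σ2 : ℝ} (hσ : ∀ t, IsPosEigenvalue M t → σ2 ≤ t) {x : ι → ℝ}
    (hx : ∀ v, M *ᵥ v = 0 → x ⬝ᵥ v = 0) : σ2 * (x ⬝ᵥ x) ≤ x ⬝ᵥ M *ᵥ x := by
  set b := hM.isHermitian.eigenvectorBasis
  set μ := hM.isHermitian.eigenvalues
  set c : ι → ℝ := fun i => x ⬝ᵥ ⇑(b i)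
  have hMb : ∀ i, M *ᵥ ⇑(b i) = μ i • ⇑(b i) := hM.isHermitian.mulVec_eigenvectorBasis
  have hexpand : ∀ y : ι → ℝ, y ⬝ᵥ x = ∑ i, (y ⬝ᵥ ⇑(b i)) * c i := by
    intro y
    simpa [EuclideanSpace.inner_eq_star_dotProduct, c, dotProduct_comm] using
      (b.sum_inner_mul_inner (toLp 2 y) (toLp 2 x)).symm
  have hMT : Mᵀ = M := by rw [← conjTranspose_eq_transpose_of_trivial]; exact hM.isHermitian
  have hcoef : ∀ i, (M *ᵥ x) ⬝ᵥ ⇑(b i) = μ i * c i := by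
    intro i
    rw [dotProduct_comm, dotProduct_mulVec, ← mulVec_transpose, hMT, hMb,
      smul_dotProduct, smul_eq_mul, dotProduct_comm]
  have hterm : ∀ i, σ2 * (c i * c i) ≤ μ i * c i * c i := by
    intro i
    rcases (hM.eigenvalues_nonneg i).eq_or_lt with h0 | hpos
    · have : c i = 0 := hx _ (by rw [hMb, show μ i = 0 from h0.symm, zero_smul])
      simp [this]
    · have hb : ⇑(b i) ≠ 0 := fun h => b.orthonormal.ne_zero i (by ext j; exact congrFun h j)
      rw [mul_assoc]
      exact mul_le_mul_of_nonneg_right (hσ _ ⟨hpos, _, hb, hMb i⟩) (mul_self_nonneg _)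
  calc σ2 * (x ⬝ᵥ x) = ∑ i, σ2 * (c i * c i) := by rw [hexpand x, Finset.mul_sum]
    _ ≤ ∑ i, μ i * c i * c i := Finset.sum_le_sum fun i _ => hterm i
    _ = x ⬝ᵥ M *ᵥ x := by rw [dotProduct_comm, hexpand]; simp only [hcoef]

lemma mul_dotProduct_self_le_of_orthogonal_ker [Fintype κ] {B : Matrix κ ι ℝ} {σ2 : ℝ}
    (hσ : ∀ t, IsPosEigenvalue (Bᵀ * B) t → σ2 ≤ t) {x : ι → ℝ}
    (hx : ∀ v, B *ᵥ v = 0 → x ⬝ᵥ v = 0) : σ2 * (x ⬝ᵥ x) ≤ (B *ᵥ x) ⬝ᵥ (B *ᵥ x) := by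
  classical
  have hgram : ∀ v, v ⬝ᵥ (Bᵀ * B) *ᵥ v = (B *ᵥ v) ⬝ᵥ (B *ᵥ v) := fun v => by
    rw [← mulVec_mulVec, dotProduct_mulVec, vecMul_transpose]
  have hpsd : (Bᵀ * B).PosSemidef := by
    simpa [conjTranspose_eq_transpose_of_trivial] using posSemidef_conjTranspose_mul_self B
  rw [← hgram]
  refine hpsd.mul_dotProduct_self_le_of_orthogonal_ker hσ fun v hv => hx v ?_
  rw [← dotProduct_self_eq_zero, ← hgram, hv, dotProduct_zero]

lemma IsPosEigenvalue.transpose_mul [Fintype κ] {B : Matrix κ ι ℝ} {t : ℝ}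
    (ht : IsPosEigenvalue (B * Bᵀ) t) : IsPosEigenvalue (Bᵀ * B) t := by
  obtain ⟨ht, y, hy, he⟩ := ht
  refine ⟨ht, Bᵀ *ᵥ y, fun h0 => hy ?_, ?_⟩
  · have : t • y = 0 := by rw [← he, ← mulVec_mulVec, h0, mulVec_zero]
    exact (smul_eq_zero.mp this).resolve_left ht.ne'
  · rw [mulVec_mulVec, Matrix.mul_assoc, ← mulVec_mulVec, he, mulVec_smul]

lemma exists_mulVec_eq_zero_and_orthogonal (B : Matrix κ ι ℝ) (x : ι → ℝ) :
    ∃ k, B *ᵥ k = 0 ∧ ∀ v, B *ᵥ v = 0 → (x - k) ⬝ᵥ v = 0 := by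
  classical
  obtain ⟨k, hk, r, hr, hxr⟩ :=
    (LinearMap.ker (toLpLin 2 2 B)).exists_add_mem_mem_orthogonal (toLp 2 x)
  have hxk : x - ofLp k = ofLp r := by rw [← ofLp_toLp 2 x, hxr]; simp
  refine ⟨ofLp k, congrArg ofLp hk, fun v hv => ?_⟩
  have := hr (toLp 2 v) (by simpa [toLpLin_apply] using hv)
  simpa [hxk, EuclideanSpace.inner_eq_star_dotProduct, dotProduct_comm] using this

end Spectral

lemma sigmaMinPos_sq_le {m n : ℕ} {A : Matrix (Fin m) (Fin n) ℝ} {t : ℝ}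
    (ht : IsPosEigenvalue (Aᵀ * A) t) : sigmaMinPos A ^ 2 ≤ t := by
  rw [sigmaMinPos, Real.sq_sqrt (Real.sInf_nonneg fun _ h => h.1.le)]
  exact csInf_le ⟨0, fun _ h => h.1.le⟩ ht

lemma sigmaMinPos_sq_mul_le {m n : ℕ} (A : Matrix (Fin m) (Fin n) ℝ) {x : Fin n → ℝ}
    (hx : ∀ v, A *ᵥ v = 0 → x ⬝ᵥ v = 0) :
    sigmaMinPos A ^ 2 * (x ⬝ᵥ x) ≤ (A *ᵥ x) ⬝ᵥ (A *ᵥ x) :=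
  mul_dotProduct_self_le_of_orthogonal_ker (fun _ => sigmaMinPos_sq_le) hx

lemma sigmaMinPos_sq_mul_le_transpose {m n : ℕ} (A : Matrix (Fin m) (Fin n) ℝ) {y : Fin m → ℝ}
    (hy : ∀ v, Aᵀ *ᵥ v = 0 → y ⬝ᵥ v = 0) :
    sigmaMinPos A ^ 2 * (y ⬝ᵥ y) ≤ (Aᵀ *ᵥ y) ⬝ᵥ (Aᵀ *ᵥ y) :=
  mul_dotProduct_self_le_of_orthogonal_ker
    (fun _ ht => sigmaMinPos_sq_le (by simpa using ht.transpose_mul)) hy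

section Ps

variable {m n : ℕ}

lemma two_mul_abs_dotProduct_mulVec_le (A : Matrix (Fin m) (Fin n) ℝ) (x : Fin n → ℝ)
    (y : Fin m → ℝ) : 2 * |y ⬝ᵥ A *ᵥ x| ≤ opNorm A * (x ⬝ᵥ x + y ⬝ᵥ y) := by
  set T := LinearMap.toContinuousLinearMap (toEuclideanLin A)
  have hinner : y ⬝ᵥ A *ᵥ x = inner ℝ (toLp 2 y) (T (toLp 2 x)) := by
    simp [T, EuclideanSpace.inner_eq_star_dotProduct, toLpLin_apply, dotProduct_comm]
  have hnorm : ∀ {k : ℕ} (v : Fin k → ℝ), ‖toLp 2 v‖ ^ 2 = v ⬝ᵥ v := fun v => by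
    rw [← real_inner_self_eq_norm_sq, EuclideanSpace.inner_toLp_toLp, star_trivial]
  have hCS : |y ⬝ᵥ A *ᵥ x| ≤ opNorm A * (‖toLp 2 x‖ * ‖toLp 2 y‖) :=
    calc |y ⬝ᵥ A *ᵥ x| ≤ ‖toLp 2 y‖ * ‖T (toLp 2 x)‖ := hinner ▸ abs_real_inner_le_norm _ _
      _ ≤ ‖toLp 2 y‖ * (opNorm A * ‖toLp 2 x‖) := by gcongr; exact T.le_opNorm _
      _ = opNorm A * (‖toLp 2 x‖ * ‖toLp 2 y‖) := by ring
  rw [← hnorm x, ← hnorm y]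
  have hAM : opNorm A * (2 * ‖toLp 2 x‖ * ‖toLp 2 y‖)
      ≤ opNorm A * (‖toLp 2 x‖ ^ 2 + ‖toLp 2 y‖ ^ 2) :=
    mul_le_mul_of_nonneg_left (two_mul_le_add_sq _ _) (norm_nonneg _)
  linarith

lemma qf_Ps_sumElim (s : ℝ) (A : Matrix (Fin m) (Fin n) ℝ) (x : Fin n → ℝ) (y : Fin m → ℝ) :
    qf (Ps s A) (Sum.elim x y) = 1 / s * (x ⬝ᵥ x + y ⬝ᵥ y) - 2 * (y ⬝ᵥ A *ᵥ x) := by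
  have hxy : x ⬝ᵥ Aᵀ *ᵥ y = y ⬝ᵥ A *ᵥ x := by
    rw [dotProduct_mulVec, vecMul_transpose, dotProduct_comm]
  simp only [qf, Ps, fromBlocks_mulVec, sumElim_dotProduct_sumElim, Sum.elim_comp_inl,
    Sum.elim_comp_inr, dotProduct_add, smul_mulVec, one_mulVec, neg_mulVec,
    dotProduct_neg, dotProduct_smul, smul_eq_mul, hxy]
  ring

lemma sub_mul_dotProduct_self_le_qf_Ps (s : ℝ) (A : Matrix (Fin m) (Fin n) ℝ)
    (v : Fin n ⊕ Fin m → ℝ) : (1 / s - opNorm A) * (v ⬝ᵥ v) ≤ qf (Ps s A) v := by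
  rw [← Sum.elim_comp_inl_inr v, qf_Ps_sumElim, sumElim_dotProduct_sumElim]
  have := two_mul_abs_dotProduct_mulVec_le A (v ∘ Sum.inl) (v ∘ Sum.inr)
  nlinarith [le_abs_self (v ∘ Sum.inr ⬝ᵥ A *ᵥ (v ∘ Sum.inl))]

lemma qf_Ps_le_add_mul_dotProduct_self (s : ℝ) (A : Matrix (Fin m) (Fin n) ℝ)
    (v : Fin n ⊕ Fin m → ℝ) : qf (Ps s A) v ≤ (1 / s + opNorm A) * (v ⬝ᵥ v) := by
  rw [← Sum.elim_comp_inl_inr v, qf_Ps_sumElim, sumElim_dotProduct_sumElim]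
  have := two_mul_abs_dotProduct_mulVec_le A (v ∘ Sum.inl) (v ∘ Sum.inr)
  nlinarith [neg_abs_le (v ∘ Sum.inr ⬝ᵥ A *ᵥ (v ∘ Sum.inl))]

lemma Ps_posDef {s : ℝ} (A : Matrix (Fin m) (Fin n) ℝ) (h : opNorm A < 1 / s) :
    (Ps s A).PosDef := by
  refine .of_dotProduct_mulVec_pos ?_ fun v hv => ?_
  · rw [IsHermitian, conjTranspose_eq_transpose_of_trivial, Ps, fromBlocks_transpose]
    simp
  · have hv : 0 < v ⬝ᵥ v := (real_dotProduct_self_nonneg v).lt_of_ne' (by simpa using hv)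
    simpa [qf] using (mul_pos (sub_pos.mpr h) hv).trans_le (sub_mul_dotProduct_self_le_qf_Ps s A v)

lemma opNorm_lt_one_div {s : ℝ} {A : Matrix (Fin m) (Fin n) ℝ} (hs : 0 < s)
    (hsA : s ≤ 1 / (2 * opNorm A)) : opNorm A < 1 / s := by
  have hN0 : 0 ≤ opNorm A := norm_nonneg _
  rcases hN0.eq_or_lt with h0 | hpos
  · rw [← h0]; positivity
  · rw [le_div_iff₀ (by positivity)] at hsA
    rw [lt_div_iff₀ hs]; linarith

lemma qf_Ps_le_two_div_mul {s : ℝ} {A : Matrix (Fin m) (Fin n) ℝ} (hN : opNorm A < 1 / s)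
    (v : Fin n ⊕ Fin m → ℝ) : qf (Ps s A) v ≤ 2 / s * (v ⬝ᵥ v) :=
  (qf_Ps_le_add_mul_dotProduct_self s A v).trans <| mul_le_mul_of_nonneg_right
    (by rw [show 2 / s = 1 / s + 1 / s by ring]; linarith) (real_dotProduct_self_nonneg v)

end Ps

lemma exists_zero_sub_sigmaMinPos_sq_mul_le {m n : ℕ} {A : Matrix (Fin m) (Fin n) ℝ}
    {b : Fin m → ℝ} {c : Fin n → ℝ} {F : (Fin n ⊕ Fin m → ℝ) → (Fin n ⊕ Fin m → ℝ)}
    (hF : ∀ z, F z = Sum.elim (c + Aᵀ.mulVec (fun j => z (Sum.inr j)))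
                             (b - A.mulVec (fun i => z (Sum.inl i))))
    {z₀ : Fin n ⊕ Fin m → ℝ} (hz₀ : F z₀ = 0) (z : Fin n ⊕ Fin m → ℝ) :
    ∃ w, F (z - w) = 0 ∧ sigmaMinPos A ^ 2 * (w ⬝ᵥ w) ≤ F z ⬝ᵥ F z := by
  set x : Fin n → ℝ := fun i => z (Sum.inl i)
  set y : Fin m → ℝ := fun j => z (Sum.inr j)
  set x₀ : Fin n → ℝ := fun i => z₀ (Sum.inl i)
  set y₀ : Fin m → ℝ := fun j => z₀ (Sum.inr j)
  rw [hF, ← Sum.elim_zero_zero, Sum.elim_eq_iff] at hz₀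
  obtain ⟨hc, hb⟩ := hz₀
  obtain ⟨kx, hkx, hx⟩ := exists_mulVec_eq_zero_and_orthogonal A (x - x₀)
  obtain ⟨ky, hky, hy⟩ := exists_mulVec_eq_zero_and_orthogonal Aᵀ (y - y₀)
  refine ⟨Sum.elim (x - x₀ - kx) (y - y₀ - ky), ?_, ?_⟩
  · have hzw : z - Sum.elim (x - x₀ - kx) (y - y₀ - ky) = Sum.elim (x₀ + kx) (y₀ + ky) := by
      ext (i | j) <;> simp [x, y, x₀, y₀] <;> ring
    rw [hzw, hF, ← Sum.elim_zero_zero, Sum.elim_eq_iff]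
    simp only [Sum.elim_inl, Sum.elim_inr, mulVec_add, hkx, hky, add_zero]
    exact ⟨hc, hb⟩
  · have hFx : c + Aᵀ *ᵥ y = Aᵀ *ᵥ (y - y₀ - ky) := by
      rw [mulVec_sub, mulVec_sub, hky, eq_neg_of_add_eq_zero_left hc]; abel
    have hFy : b - A *ᵥ x = -(A *ᵥ (x - x₀ - kx)) := by
      rw [mulVec_sub, mulVec_sub, hkx, ← sub_eq_zero.mp hb]; abel
    rw [hF, sumElim_dotProduct_sumElim, sumElim_dotProduct_sumElim, hFx, hFy, neg_dotProduct_neg]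
    linarith [sigmaMinPos_sq_mul_le A hx, sigmaMinPos_sq_mul_le_transpose A hy]

/-- Metric sub-regularity for the unconstrained bilinear problem
`min_x max_y cᵀx + yᵀAx - bᵀy`, whose operator is `F(z) = (c + Aᵀy, b - Ax)`. -/
theorem stmt11 {m n : ℕ} (s : ℝ) (A : Matrix (Fin m) (Fin n) ℝ)
    (b : Fin m → ℝ) (c : Fin n → ℝ)
    (hs : 0 < s) (hsA : s ≤ 1 / (2 * opNorm A))
    (F : (Fin n ⊕ Fin m → ℝ) → (Fin n ⊕ Fin m → ℝ))
    (hF : ∀ z, F z = Sum.elim (c + Aᵀ.mulVec (fun j => z (Sum.inr j)))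
                             (b - A.mulVec (fun i => z (Sum.inl i))))
    (hZ : {z : Fin n ⊕ Fin m → ℝ | F z = 0}.Nonempty) :
    ∀ z : Fin n ⊕ Fin m → ℝ,
      (s/2) * sigmaMinPos A *
        Real.sqrt (distSqTo (Ps s A) ((fun u => z - u) '' {z' | F z' = 0}))
        ≤ Real.sqrt (qf (Ps s A)⁻¹ (F z)) := by
  intro z
  obtain ⟨z₀, hz₀⟩ := hZ
  have hN := opNorm_lt_one_div hs hsA
  have hPD := Ps_posDef A hN
  obtain ⟨w, hw, hres⟩ := exists_zero_sub_sigmaMinPos_sq_mul_le hF hz₀ z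
  set D := distSqTo (Ps s A) ((fun u => z - u) '' {z' | F z' = 0})
  have hD : D ≤ 2 / s * (w ⬝ᵥ w) :=
    calc D ≤ qf (Ps s A) w := distSqTo_le_qf hPD.posSemidef ⟨z - w, hw, sub_sub_cancel z w⟩
      _ ≤ 2 / s * (w ⬝ᵥ w) := qf_Ps_le_two_div_mul hN w
  have hQ := dotProduct_self_le_mul_qf_inv hPD (qf_Ps_le_two_div_mul hN) (F z)
  have key : (s / 2 * sigmaMinPos A) ^ 2 * D ≤ qf (Ps s A)⁻¹ (F z) :=
    calc (s / 2 * sigmaMinPos A) ^ 2 * D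
        ≤ (s / 2 * sigmaMinPos A) ^ 2 * (2 / s * (w ⬝ᵥ w)) := by gcongr
      _ = s / 2 * (sigmaMinPos A ^ 2 * (w ⬝ᵥ w)) := by field_simp
      _ ≤ s / 2 * (2 / s * qf (Ps s A)⁻¹ (F z)) :=
          mul_le_mul_of_nonneg_left (hres.trans hQ) (by positivity)
      _ = qf (Ps s A)⁻¹ (F z) := by field_simp
  have hσ : 0 ≤ s / 2 * sigmaMinPos A := mul_nonneg (by positivity) (Real.sqrt_nonneg _)
  calc s / 2 * sigmaMinPos A * Real.sqrt D = Real.sqrt ((s / 2 * sigmaMinPos A) ^ 2 * D) := by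
        rw [Real.sqrt_mul (sq_nonneg _), Real.sqrt_sq hσ]
    _ ≤ Real.sqrt (qf (Ps s A)⁻¹ (F z)) := Real.sqrt_le_sqrt key
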